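/- For all integers N ≥ 2 and n ≥ 1, B_{N,n} = (N/(N+n)) · ∑_{m=0}^{n−1} ∑_{1 ≤ i_m < ⋯ < i_1 < i_0 = n} B_{N−1,i_m} · ∏_{k=1}^{m} ( B_{N−1, i_{k−1}−i_k+1} · C(i_{k−1}, i_{k−1}−i_k+1) · N/(N+i_k) ), where the inner sum is over all strictly decreasing chains n = i_0 > i_1 > ⋯ > i_m ≥ 1 of positive integers (for m = 0 the summand is B_{N−1,n} and the product is empty), and C(a,b) denotes the binomial coefficient. -/

import Mathlib

/-!
Write `f_N = hgSeries N` and `g_N = f_N⁻¹ = ∑ B_{N,n} xⁿ/n!`. The series satisfy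
`x f_{N+1} = (N+1) (f_N - 1)` and `x f_N' = N (1 - f_N) + x f_N`; eliminating `x` gives
`(f - f') f_N = f² - f'` for `f = f_{N+1}`, that is `g' + g = g_N (1 + g')` for `g = g_{N+1}`.
Comparing coefficients of `xⁿ/n!` yields the recursion
`B_{N,n} = N/(N+n) (B_{N-1,n} + ∑_{1 ≤ j < n} B_{N-1,n-j+1} C(n, n-j+1) B_{N,j})`,
and unfolding it along the indices `n > j > ⋯` produces the sum over decreasing chains.
-/

/-- The power series ∑_{i≥0} (N!/(N+i)!) xⁱ over ℚ. -/
noncomputable def hgSeries (N : ℕ) : PowerSeries ℚ :=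
  PowerSeries.mk fun i => (N.factorial : ℚ) / ((N + i).factorial : ℚ)

/-- The hypergeometric Bernoulli number `B_{N,n}`, defined so that
`∑ (B_{N,n}/n!) xⁿ` is the multiplicative inverse of `hgSeries N` in ℚ[[x]]. -/
noncomputable def hB (N n : ℕ) : ℚ :=
  (n.factorial : ℚ) * PowerSeries.coeff n (hgSeries N)⁻¹

open Finset

section Chains

variable {R : Type*} [CommSemiring R] (a : ℕ → R) (t : ℕ → ℕ → R)

def IsChainFrom {m : ℕ} (n : ℕ) (v : Fin (m + 1) → ℕ) : Prop :=
  v 0 = n ∧ StrictAnti v ∧ 1 ≤ v (Fin.last m)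

def chainWeight {m : ℕ} (v : Fin (m + 1) → ℕ) : R :=
  a (v (Fin.last m)) * ∏ k : Fin m, t (v k.castSucc) (v k.succ)

/- `K` only bounds the values of the chains, so that `chainSum_succ` can peel off the first step
without changing their type. -/
open scoped Classical in
noncomputable def chainSum (K m n : ℕ) : R :=
  ∑ c ∈ univ.filter (fun c : Fin (m + 1) → Fin (K + 1) => IsChainFrom n (Fin.val ∘ c)),
    chainWeight a t (Fin.val ∘ c)

variable {a t}

lemma strictAnti_cons_iff {α : Type*} [Preorder α] {m : ℕ} {i : α} {v : Fin (m + 1) → α} :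
    StrictAnti (Fin.cons i v : Fin (m + 2) → α) ↔ v 0 < i ∧ StrictAnti v := by
  simp only [Fin.strictAnti_iff_succ_lt (f := v), Fin.strictAnti_iff_succ_lt, Fin.forall_fin_succ,
    Fin.cons_succ, Fin.castSucc_zero, Fin.cons_zero, ← Fin.succ_castSucc]

lemma isChainFrom_cons_iff {m n i : ℕ} {v : Fin (m + 1) → ℕ} :
    IsChainFrom n (Fin.cons i v : Fin (m + 2) → ℕ) ↔ i = n ∧ v 0 < n ∧ IsChainFrom (v 0) v := by
  simp only [IsChainFrom, strictAnti_cons_iff, Fin.cons_zero, ← Fin.succ_last, Fin.cons_succ,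
    true_and]
  constructor
  · rintro ⟨rfl, ⟨h0, hv⟩, hl⟩
    exact ⟨rfl, h0, hv, hl⟩
  · rintro ⟨rfl, h0, hv, hl⟩
    exact ⟨rfl, ⟨h0, hv⟩, hl⟩

lemma chainWeight_cons {m i : ℕ} (v : Fin (m + 1) → ℕ) :
    chainWeight a t (Fin.cons i v : Fin (m + 2) → ℕ) = t i (v 0) * chainWeight a t v := by
  simp only [chainWeight, Fin.prod_univ_succ, ← Fin.succ_last, Fin.cons_succ, Fin.castSucc_zero,
    Fin.cons_zero, ← Fin.succ_castSucc]
  exact mul_left_comm _ _ _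

lemma IsChainFrom.mem_Ico_one {m n : ℕ} {v : Fin (m + 1 + 1) → ℕ} (h : IsChainFrom n v) :
    v 1 ∈ Ico 1 n :=
  mem_Ico.2 ⟨h.2.2.trans (h.2.1.antitone (Fin.le_last 1)), h.1 ▸ h.2.1 Fin.zero_lt_one⟩

lemma chainSum_zero {K n : ℕ} (hn : 1 ≤ n) (hnK : n ≤ K) : chainSum a t K 0 n = a n := by
  classical
  have hchains : univ.filter (fun c : Fin 1 → Fin (K + 1) => IsChainFrom n (Fin.val ∘ c)) =
      {fun _ => ⟨n, Nat.lt_succ_of_le hnK⟩} := by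
    ext c
    simp only [mem_filter, mem_univ, true_and, mem_singleton, IsChainFrom, Function.comp_apply,
      Fin.last_zero, funext_iff, Fin.forall_fin_one, Fin.ext_iff]
    exact ⟨fun h => h.1, fun h => ⟨h, Subsingleton.strictAnti (α := Fin 1) _, h ▸ hn⟩⟩
  simp [chainSum, hchains, chainWeight]

open scoped Classical in
lemma sum_chainWeight_fiber {K m n j : ℕ} (hnK : n ≤ K) (hjn : j < n) :
    ∑ c ∈ univ.filter (fun c : Fin (m + 1 + 1) → Fin (K + 1) => IsChainFrom n (Fin.val ∘ c)) with
        (c 1 : ℕ) = j, chainWeight a t (Fin.val ∘ c) =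
      t n j * chainSum a t K m j := by
  rw [chainSum, mul_sum]
  refine sum_nbij' Fin.tail (Fin.cons (α := fun _ => Fin (K + 1)) ⟨n, Nat.lt_succ_of_le hnK⟩)
    ?_ ?_ ?_ ?_ ?_
  all_goals intro c hc
  all_goals simp only [mem_filter, mem_univ, true_and] at hc ⊢
  · obtain ⟨x, d, rfl⟩ : ∃ x d, c = Fin.cons x d := ⟨_, _, (Fin.cons_self_tail c).symm⟩
    simp only [Fin.comp_cons, isChainFrom_cons_iff, Fin.tail_cons, Fin.cons_one] at hc ⊢
    exact hc.2 ▸ hc.1.2.2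
  · have h0 : (c 0 : ℕ) = j := hc.1
    simp only [Fin.comp_cons, isChainFrom_cons_iff, Fin.cons_one, Function.comp_apply, h0,
      true_and, and_true]
    exact ⟨hjn, hc⟩
  · obtain ⟨x, d, rfl⟩ : ∃ x d, c = Fin.cons x d := ⟨_, _, (Fin.cons_self_tail c).symm⟩
    simp only [Fin.comp_cons, isChainFrom_cons_iff] at hc
    rw [Fin.tail_cons]
    congr 1
    exact Fin.ext hc.1.1.symm
  · exact Fin.tail_cons _ _
  · obtain ⟨x, d, rfl⟩ : ∃ x d, c = Fin.cons x d := ⟨_, _, (Fin.cons_self_tail c).symm⟩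
    simp only [Fin.comp_cons, isChainFrom_cons_iff, Fin.cons_one] at hc
    rw [Fin.comp_cons, chainWeight_cons, Fin.tail_cons, hc.1.1, ← hc.2]
    rfl

lemma chainSum_succ {K m n : ℕ} (hnK : n ≤ K) :
    chainSum a t K (m + 1) n = ∑ j ∈ Ico 1 n, t n j * chainSum a t K m j := by
  classical
  have hmaps : ∀ c ∈ univ.filter (fun c : Fin (m + 1 + 1) → Fin (K + 1) =>
      IsChainFrom n (Fin.val ∘ c)), (c 1 : ℕ) ∈ Ico 1 n :=
    fun c hc => (mem_filter.1 hc).2.mem_Ico_one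
  rw [chainSum, ← sum_fiberwise_of_maps_to hmaps]
  exact sum_congr rfl fun j hj => sum_chainWeight_fiber hnK (mem_Ico.1 hj).2

lemma chainSum_eq_zero_of_le {K m n : ℕ} (hnK : n ≤ K) (hnm : n ≤ m) :
    chainSum a t K m n = 0 := by
  induction m generalizing n with
  | zero =>
    classical
    refine sum_eq_zero fun c hc => absurd (mem_filter.1 hc).2 fun h => ?_
    have := h.2.2
    rw [Fin.last_zero, h.1] at this
    omega
  | succ m ih =>
    rw [chainSum_succ hnK]
    exact sum_eq_zero fun j hj => by
      rw [ih ((mem_Ico.1 hj).2.le.trans hnK) (by grind), mul_zero]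

lemma sum_range_chainSum_eq {K L j : ℕ} (hjK : j ≤ K) (hjL : j ≤ L) :
    ∑ m ∈ range L, chainSum a t K m j = ∑ m ∈ range j, chainSum a t K m j :=
  (sum_subset (range_subset_range.2 hjL) fun _ _ hm =>
    chainSum_eq_zero_of_le hjK (not_lt.1 (mem_range.not.1 hm))).symm

theorem eq_mul_sum_chainSum {B w : ℕ → R} {s : ℕ → ℕ → R}
    (hB : ∀ n, 1 ≤ n → B n = w n * (a n + ∑ j ∈ Ico 1 n, s n j * B j)) {K n : ℕ}
    (hn : 1 ≤ n) (hnK : n ≤ K) :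
    B n = w n * ∑ m ∈ range n, chainSum a (fun i j => s i j * w j) K m n := by
  induction n using Nat.strong_induction_on with
  | _ n ih =>
  obtain ⟨n, rfl⟩ : ∃ n', n = n' + 1 := ⟨n - 1, by omega⟩
  rw [hB _ hn, sum_range_succ', chainSum_zero hn hnK, add_comm (a _)]
  simp only [chainSum_succ hnK]
  rw [sum_comm]
  congr 2
  refine sum_congr rfl fun j hj => ?_
  obtain ⟨hj1, hjn⟩ := mem_Ico.1 hj
  rw [← mul_sum, sum_range_chainSum_eq (by omega) (by omega), mul_assoc,
    ← ih j hjn hj1 (by omega)]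

end Chains

open PowerSeries Nat

namespace PowerSeries

variable {R : Type*} [CommSemiring R]

lemma factorial_mul_coeff_mul (p q : R⟦X⟧) (n : ℕ) :
    n ! * coeff n (p * q) =
      ∑ k ∈ range (n + 1), n.choose k * (k ! * coeff k p) * ((n - k)! * coeff (n - k) q) := by
  rw [coeff_mul, Nat.sum_antidiagonal_eq_sum_range_succ_mk, mul_sum]
  refine sum_congr rfl fun k hk => ?_
  rw [← Nat.choose_mul_factorial_mul_factorial (Nat.le_of_lt_succ (mem_range.1 hk))]
  push_cast
  ring

lemma factorial_mul_coeff_derivative (p : R⟦X⟧) (n : ℕ) :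
    n ! * coeff n (d⁄dX R p) = (n + 1)! * coeff (n + 1) p := by
  rw [coeff_derivative, Nat.factorial_succ]
  push_cast
  ring

end PowerSeries

lemma coeff_hgSeries (N i : ℕ) : coeff i (hgSeries N) = (N ! : ℚ) / (N + i)! :=
  coeff_mk _ _

lemma constantCoeff_hgSeries (N : ℕ) : constantCoeff (hgSeries N) = 1 := by
  rw [← coeff_zero_eq_constantCoeff_apply, coeff_hgSeries, add_zero,
    div_self (Nat.cast_ne_zero.2 N.factorial_ne_zero)]

lemma X_mul_hgSeries_succ (N : ℕ) :
    X * hgSeries (N + 1) = C ((N : ℚ) + 1) * (hgSeries N - 1) := by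
  ext (_ | i)
  · simp [constantCoeff_hgSeries]
  · rw [coeff_succ_X_mul, coeff_C_mul, map_sub, coeff_one, if_neg i.succ_ne_zero, coeff_hgSeries,
      coeff_hgSeries, sub_zero, show N + (i + 1) = N + 1 + i by ring, Nat.factorial_succ]
    push_cast
    ring

lemma X_mul_derivative_hgSeries (N : ℕ) :
    X * d⁄dX ℚ (hgSeries N) = C (N : ℚ) * (1 - hgSeries N) + X * hgSeries N := by
  ext (_ | i)
  · simp [constantCoeff_hgSeries]
  · rw [map_add, coeff_succ_X_mul, coeff_succ_X_mul, coeff_derivative, coeff_C_mul, map_sub,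
      coeff_one, if_neg i.succ_ne_zero, coeff_hgSeries, coeff_hgSeries,
      show N + (i + 1) = N + i + 1 by ring, Nat.factorial_succ (N + i)]
    field_simp
    push_cast
    ring

lemma hgSeries_sub_derivative_mul (N : ℕ) :
    (hgSeries (N + 1) - d⁄dX ℚ (hgSeries (N + 1))) * hgSeries N =
      hgSeries (N + 1) ^ 2 - d⁄dX ℚ (hgSeries (N + 1)) := by
  have hX := X_mul_hgSeries_succ N
  have hD := X_mul_derivative_hgSeries (N + 1)
  have hC : C ((N : ℚ) + 1) ≠ 0 := (map_ne_zero_iff _ C_injective).2 (by positivity)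
  refine mul_left_cancel₀ hC ?_
  push_cast at hD
  linear_combination
    (-(hgSeries (N + 1) - d⁄dX ℚ (hgSeries (N + 1)))) * hX - hgSeries (N + 1) * hD

lemma derivative_inv_hgSeries_add_inv (N : ℕ) :
    d⁄dX ℚ (hgSeries (N + 1))⁻¹ + (hgSeries (N + 1))⁻¹ =
      (hgSeries N)⁻¹ * (1 + d⁄dX ℚ (hgSeries (N + 1))⁻¹) := by
  set f := hgSeries (N + 1)
  set g := f⁻¹
  have hf : g * f = 1 := PowerSeries.inv_mul_cancel _ (by simp [f, constantCoeff_hgSeries])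
  have hfm : (hgSeries N)⁻¹ * hgSeries N = 1 :=
    PowerSeries.inv_mul_cancel _ (by simp [constantCoeff_hgSeries])
  rw [derivative_inv']
  linear_combination ((hgSeries N)⁻¹ * (g * f + 1) - g) * hf
    - g ^ 2 * (f - d⁄dX ℚ f) * hfm + (hgSeries N)⁻¹ * g ^ 2 * hgSeries_sub_derivative_mul N

lemma hB_zero (N : ℕ) : hB N 0 = 1 := by
  simp [hB, constantCoeff_hgSeries]

lemma hB_one (N : ℕ) : hB N 1 = -1 / ((N : ℚ) + 1) := by
  have h : (N ! : ℚ) ≠ 0 := Nat.cast_ne_zero.2 N.factorial_ne_zero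
  rw [hB, coeff_inv, if_neg one_ne_zero]
  simp [constantCoeff_hgSeries, coeff_hgSeries, Nat.antidiagonal_succ, Nat.factorial_succ,
    div_mul_cancel_right₀ h, neg_div]

lemma hB_succ_add (N n : ℕ) :
    hB (N + 1) (n + 1) + hB (N + 1) n =
      hB N n + ∑ k ∈ range (n + 1), n.choose k * hB N k * hB (N + 1) (n - k + 1) := by
  have h := derivative_inv_hgSeries_add_inv N
  rw [mul_one_add] at h
  replace h := congrArg (fun p => (n ! : ℚ) * coeff n p) h
  simp only [map_add, mul_add, factorial_mul_coeff_mul, factorial_mul_coeff_derivative] at h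
  simpa only [hB] using h

lemma hB_recursion {N n : ℕ} (hN : 1 ≤ N) (hn : 1 ≤ n) :
    hB N n = (N / (N + n)) * (hB (N - 1) n +
      ∑ j ∈ Ico 1 n, hB (N - 1) (n - j + 1) * n.choose (n - j + 1) * hB N j) := by
  obtain ⟨N, rfl⟩ : ∃ M, N = M + 1 := ⟨N - 1, by omega⟩
  obtain ⟨n, rfl⟩ : ∃ m, n = m + 1 := ⟨n - 1, by omega⟩
  have hreflect :
      ∑ k ∈ range n, (n + 1).choose (k + 2) * hB N (k + 2) * hB (N + 1) (n + 1 - (k + 2) + 1) =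
        ∑ j ∈ Ico 1 (n + 1),
          hB N (n + 1 - j + 1) * (n + 1).choose (n + 1 - j + 1) * hB (N + 1) j := by
    refine sum_nbij' (fun k => n - k) (fun j => n - j) ?_ ?_ ?_ ?_ ?_
    all_goals intro k hk
    all_goals simp only [mem_range, mem_Ico] at hk ⊢
    · omega
    · omega
    · omega
    · omega
    · rw [show n + 1 - (n - k) + 1 = k + 2 by omega, show n + 1 - (k + 2) + 1 = n - k by omega]
      ring
  -- the terms `k = 0, 1` of the convolution involve `hB (N + 1)`: the first cancels, the second
  -- produces the factor `(N + 1) / (N + 1 + n)`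
  have h := hB_succ_add N (n + 1)
  rw [sum_range_succ', sum_range_succ', hreflect, hB_zero, hB_one] at h
  simp only [Nat.add_sub_cancel, Nat.choose_zero_right, Nat.choose_one_right, Nat.sub_zero,
    zero_add] at h ⊢
  push_cast at h ⊢
  field_simp at h
  rw [div_mul_eq_mul_div, eq_div_iff (by positivity)]
  linear_combination h

open scoped Classical in
/-- Here a strictly decreasing chain `n = i₀ > i₁ > ⋯ > i_m ≥ 1` is encoded as a
strictly antitone function `c : Fin (m+1) → Fin (n+1)` with `c 0 = n` and
`1 ≤ c (Fin.last m)`; for `k : Fin m`, `c k.castSucc` is `i_{k-1}` and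
`c k.succ` is `i_k` (1-indexed as in the paper). -/
theorem stmt9 (N n : ℕ) (hN : 2 ≤ N) (hn : 1 ≤ n) :
    hB N n = ((N : ℚ) / ((N : ℚ) + n)) *
      ∑ m ∈ Finset.range n,
        ∑ c ∈ Finset.univ.filter (fun c : Fin (m + 1) → Fin (n + 1) =>
            (c 0 : ℕ) = n ∧ StrictAnti c ∧ 1 ≤ (c (Fin.last m) : ℕ)),
          hB (N - 1) (c (Fin.last m)) *
            ∏ k : Fin m,
              (hB (N - 1) ((c k.castSucc : ℕ) - (c k.succ : ℕ) + 1) *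
                ((c k.castSucc : ℕ).choose ((c k.castSucc : ℕ) - (c k.succ : ℕ) + 1) : ℚ) *
                ((N : ℚ) / ((N : ℚ) + (c k.succ : ℕ)))) := by
  rw [eq_mul_sum_chainSum (fun n hn => hB_recursion (by omega) hn) hn le_rfl]
  unfold chainSum
  congr!
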